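/- Let D be the 5×5 matrix with rows (0, j3, j2, -k1, p1), (-j3, 0, j1, k2, -p2), (-j2, -j1, 0, -k3, p3), (-k1, k2, -k3, 0, h), (-p1, p2, -p3, h, 0) over ℚ[j1,j2,j3,p1,p2,p3,k1,k2,k3,h]. Then det(D - T·Id₅) = T⁵ + C₂T³ + C₄T, where C₂ = (j·j) + (p·p) - (k·k) - h², and C₄ = -(j·j)h² - ((p·p)(k·k) - (p·k)²) + (j·p)² - (j·k)² + 2(j·(p×k))h, with a·b denoting the standard dot product of the triples and p×k the cross product. -/
import Mathlib


open Matrix Polynomial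

noncomputable def j1 : MvPolynomial (Fin 10) ℚ := MvPolynomial.X 0
noncomputable def j2 : MvPolynomial (Fin 10) ℚ := MvPolynomial.X 1
noncomputable def j3 : MvPolynomial (Fin 10) ℚ := MvPolynomial.X 2
noncomputable def p1 : MvPolynomial (Fin 10) ℚ := MvPolynomial.X 3
noncomputable def p2 : MvPolynomial (Fin 10) ℚ := MvPolynomial.X 4
noncomputable def p3 : MvPolynomial (Fin 10) ℚ := MvPolynomial.X 5
noncomputable def k1 : MvPolynomial (Fin 10) ℚ := MvPolynomial.X 6
noncomputable def k2 : MvPolynomial (Fin 10) ℚ := MvPolynomial.X 7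
noncomputable def k3 : MvPolynomial (Fin 10) ℚ := MvPolynomial.X 8
noncomputable def h : MvPolynomial (Fin 10) ℚ := MvPolynomial.X 9

noncomputable def D : Matrix (Fin 5) (Fin 5) (MvPolynomial (Fin 10) ℚ) :=
  !![0, j3, j2, -k1, p1;
    -j3, 0, j1, k2, -p2;
    -j2, -j1, 0, -k3, p3;
    -k1, k2, -k3, 0, h;
    -p1, p2, -p3, h, 0]

set_option maxHeartbeats 1600000000 in
theorem main :
    Matrix.det ((Polynomial.X : Polynomial (MvPolynomial (Fin 10) ℚ)) • (1 : Matrix (Fin 5) (Fin 5) (Polynomial (MvPolynomial (Fin 10) ℚ))) - (D.map Polynomial.C)) =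
      Polynomial.X ^ 5 + Polynomial.C ((j1^2 + j2^2 + j3^2) + (p1^2 + p2^2 + p3^2) - (k1^2 + k2^2 + k3^2) - h^2) * Polynomial.X ^ 3 + Polynomial.C (-(j1^2 + j2^2 + j3^2)*h^2 - ((p1^2 + p2^2 + p3^2)*(k1^2 + k2^2 + k3^2) - (p1*k1 + p2*k2 + p3*k3)^2) + (j1*p1 + j2*p2 + j3*p3)^2 - (j1*k1 + j2*k2 + j3*k3)^2 + 2*(j1*(p2*k3 - p3*k2) + j2*(p3*k1 - p1*k3) + j3*(p1*k2 - p2*k1))*h) * Polynomial.X := by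
  simp only [D, Matrix.det_succ_row_zero, Fin.sum_univ_succ, Fin.sum_univ_zero,
    Matrix.sub_apply, Matrix.smul_apply, Matrix.one_apply, Matrix.map_apply,
    Matrix.submatrix_apply, Fin.succAbove, Matrix.cons_val', Matrix.cons_val_zero,
    Matrix.cons_val_succ, Matrix.empty_val', Matrix.cons_val_fin_one, Matrix.cons_val_one,
    Matrix.head_cons, Matrix.head_fin_const, Fin.isValue, smul_eq_mul]
  norm_num [Fin.lt_def]
  norm_num [Fin.ext_iff]
  simp only [show ((2:Fin 3).castSucc : Fin 4) = 2 from rfl,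
    show ((2:Fin 4).castSucc : Fin 5) = 2 from rfl,
    show (((2:Fin 3).castSucc).castSucc : Fin 5) = 2 from rfl,
    show (((2:Fin 3).succ).castSucc : Fin 5) = 3 from rfl,
    show ((2:Fin 3).succ : Fin 4) = 3 from rfl,
    show ((3:Fin 4).castSucc : Fin 5) = 3 from rfl,
    show ((3:Fin 4).succ : Fin 5) = 4 from rfl]
  norm_num [Matrix.cons_val_zero, Matrix.cons_val_one, Matrix.cons_val_two,
    Matrix.cons_val_three, Matrix.cons_val_four, Matrix.head_cons, Matrix.tail_cons,
    Matrix.vecHead, Matrix.vecTail]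
  simp only [map_ofNat]
  ring
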